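/- arXiv:1201.0171 — 2 statements merged into one kernel-verified Lean document; each statement's English description precedes it below -/
import Mathlib

section
/- If n ≥ 2 is even, then SG(n) ≠ 0. -/
/-- mex of the two-element set {a, b}: the least natural number not in {a, b}. -/
def mex2 (a b : ℕ) : ℕ :=
  if 0 ≠ a ∧ 0 ≠ b then 0 else if 1 ≠ a ∧ 1 ≠ b then 1 else if 2 ≠ a ∧ 2 ≠ b then 2 else 3

/-- The Sprague–Grundy sequence of the game G_{1,2d}: SG d 1 = 0 and
    SG d n = mex {SG d (n-1), SG d ⌈n/(2d)⌉} for n ≥ 2. -/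
def SG (d : ℕ) : ℕ → ℕ
  | 0 => 0
  | 1 => 0
  | n + 2 => mex2 (SG d (n + 1)) (SG d ((n + 2 + (2 * d - 1)) / (2 * d)))
decreasing_by
  · omega
  · rcases Nat.eq_zero_or_pos d with h | h
    · simp [h]
    · have h2 : 0 < 2 * d := by omega
      rw [Nat.div_lt_iff_lt_mul h2]
      simp only [Nat.succ_eq_add_one]
      have h6 : (n + 1 + 1) * 2 ≤ (n + 1 + 1) * (2 * d) := Nat.mul_le_mul_left _ (by omega)
      have h8 : 2 * (2 * d) ≤ (n + 1 + 1) * (2 * d) := Nat.mul_le_mul_right _ (by omega)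
      omega

/-! A position n is losing (SG = 0) exactly when both options are winning. Since the ceiling
`⌈n/(2d)⌉` does not change from an odd n to n + 1, the even position n + 1 has the same
second option as the odd position n: if that option is losing, n + 1 wins by moving to it;
otherwise, inductively, both options of n win, so n loses and n + 1 wins by moving to n. -/

lemma mex2_eq_zero_iff {a b : ℕ} : mex2 a b = 0 ↔ a ≠ 0 ∧ b ≠ 0 := by
  unfold mex2; split_ifs <;> simp <;> omega

lemma ceilDiv_succ_eq_of_odd {b n : ℕ} (hb : Even b) (hn : Odd n) :
    (n + 1 + (b - 1)) / b = (n + (b - 1)) / b := by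
  rcases Nat.eq_zero_or_pos b with rfl | hpos
  · simp
  · rw [add_right_comm]
    refine Nat.succ_div_of_not_dvd fun hdvd => ?_
    have : 2 ∣ n + b := hb.two_dvd.trans (by rwa [show n + b = n + (b - 1) + 1 by omega])
    exact Nat.not_even_iff_odd.mpr (hn.add_even hb) (even_iff_two_dvd.mpr this)

lemma SG_add_two (d n : ℕ) :
    SG d (n + 2) = mex2 (SG d (n + 1)) (SG d ((n + 2 + (2 * d - 1)) / (2 * d))) := by
  rw [SG]

lemma SG_two_mul_add_two_ne_zero (d k : ℕ) : SG d (2 * k + 2) ≠ 0 := by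
  induction k with
  | zero => simp [SG_add_two, SG, mex2_eq_zero_iff]
  | succ k ih =>
    set m := (2 * k + 3 + (2 * d - 1)) / (2 * d)
    have hm : (2 * k + 4 + (2 * d - 1)) / (2 * d) = m :=
      ceilDiv_succ_eq_of_odd (even_two_mul d) (odd_two_mul_add_one (k + 1))
    have hodd : SG d (2 * k + 2 + 1) = mex2 (SG d (2 * k + 2)) (SG d m) :=
      SG_add_two d (2 * k + 1)
    rw [show 2 * (k + 1) + 2 = 2 * k + 2 + 2 by ring, SG_add_two, hm]
    intro hlose
    obtain ⟨hodd_ne, hm_ne⟩ := mex2_eq_zero_iff.mp hlose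
    exact hodd_ne (hodd ▸ mex2_eq_zero_iff.mpr ⟨ih, hm_ne⟩)

theorem stmt_4_general (d : ℕ) (n : ℕ) (hn : 2 ≤ n) (he : Even n) :
    SG d n ≠ 0 := by
  obtain ⟨k, rfl⟩ : ∃ k, n = 2 * k + 2 := by
    obtain ⟨r, rfl⟩ := he
    exact ⟨r - 1, by omega⟩
  exact SG_two_mul_add_two_ne_zero d k

theorem stmt_4 (d : ℕ) (hd : 1 ≤ d) (n : ℕ) (hn : 2 ≤ n) (he : Even n) :
    SG d n ≠ 0 :=
  stmt_4_general d n hn he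
end

section
/- (Reduction 1) Let d ≥ 1. For any m ≥ 1 and even c₁, odd c₂ with 0 ≤ c₁, c₂ ≤ 2d-1, writing n = 1 + 2d·c₁ + (2d)²·c₂ + (2d)³·m, one has SG(n) = SG(c₁ + 2d·c₂ + (2d)²·m). -/
/-!
On a block `2d·i < n ≤ 2d·(i+1)` one has `⌈n/(2d)⌉ = i + 1`, so there `SG n = mex2 (SG (n-1)) v`
with the constant `v = SG (i+1)`. Since `x ↦ mex2 x v` is an involution on `{0,1,2} \ {v}`, `SG` has
period two inside each block, and an induction over the blocks shows `SG n ≠ 0` for even `n ≥ 2`.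

The argument is `2d·K + 1` with `K = c₁ + 2d·q`, `K` even and `q = c₂ + 2d·m` odd. Then
`SG (K+1) = SG (2dq+1) = mex2 (SG (2dq)) (SG (q+1)) = 0` and likewise `SG (2d(K-1)+1) = 0`, so
`SG (2dK) = SG (2d(K-1)+2) = mex2 0 (SG K)` and `SG (2dK+1) = mex2 (mex2 0 (SG K)) 0 = SG K`.
-/

lemma mex2_comm (a b : ℕ) : mex2 a b = mex2 b a := by
  unfold mex2; split_ifs <;> omega

lemma mex2_le_two (a b : ℕ) : mex2 a b ≤ 2 := by
  unfold mex2; split_ifs <;> omega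

lemma mex2_ne_right (a b : ℕ) : mex2 a b ≠ b := by
  unfold mex2; split_ifs <;> omega

lemma mex2_mex2_of_ne {a b : ℕ} (ha : a ≤ 2) (hb : b ≤ 2) (hab : a ≠ b) :
    mex2 (mex2 a b) b = a := by
  interval_cases a <;> interval_cases b <;> simp_all [mex2]

lemma SG_le_two (d n : ℕ) : SG d n ≤ 2 := by
  match n with
  | 0 | 1 => simp [SG]
  | _ + 2 => rw [SG]; exact mex2_le_two _ _

lemma SG_block {d : ℕ} (hd : 0 < d) {i p : ℕ} (hp : p < 2 * d) (hn : 0 < 2 * d * i + p) :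
    SG d (2 * d * i + p + 1) = mex2 (SG d (2 * d * i + p)) (SG d (i + 1)) := by
  obtain ⟨n, hn⟩ : ∃ n, 2 * d * i + p = n + 1 := ⟨2 * d * i + p - 1, by omega⟩
  have hceil : (n + 2 + (2 * d - 1)) / (2 * d) = i + 1 := by
    rw [show n + 2 + (2 * d - 1) = p + 2 * d * (i + 1) by rw [mul_add]; omega,
      Nat.add_mul_div_left _ _ (by omega), Nat.div_eq_of_lt hp, zero_add]
  rw [hn, SG, hceil]

lemma SG_block_add_two {d : ℕ} (hd : 0 < d) {i p : ℕ} (hp : 0 < p) (hp' : p + 2 ≤ 2 * d)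
    (hn : 2 ≤ 2 * d * i + p) :
    SG d (2 * d * i + p + 2) = SG d (2 * d * i + p) := by
  obtain ⟨q, rfl⟩ : ∃ q, p = q + 1 := ⟨p - 1, by omega⟩
  have h₀ := SG_block hd (i := i) (p := q) (by omega) (by omega)
  have h₁ := SG_block hd (i := i) (p := q + 1) (by omega) (by omega)
  have h₂ := SG_block hd (i := i) (p := q + 2) (by omega) (by omega)
  rw [← add_assoc] at h₁ ⊢
  rw [show 2 * d * i + (q + 2) + 1 = 2 * d * i + q + 1 + 2 by omega,
    show 2 * d * i + (q + 2) = 2 * d * i + q + 1 + 1 by omega, h₁] at h₂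
  rw [h₂, h₀]
  exact mex2_mex2_of_ne (mex2_le_two _ _) (SG_le_two _ _) (mex2_ne_right _ _)

lemma SG_block_add_two_mul {d : ℕ} (hd : 0 < d) {i p : ℕ} (k : ℕ) (hp : 0 < p)
    (hpk : p + 2 * k ≤ 2 * d) (hn : 2 ≤ 2 * d * i + p) :
    SG d (2 * d * i + p + 2 * k) = SG d (2 * d * i + p) := by
  induction k with
  | zero => rfl
  | succ k ih =>
    rw [show 2 * d * i + p + 2 * (k + 1) = 2 * d * i + p + 2 * k + 2 by ring,
      ← ih (by omega)]
    rw [show 2 * d * i + p + 2 * k = 2 * d * i + (p + 2 * k) by ring]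
    exact SG_block_add_two hd (by omega) (by omega) (by omega)

lemma SG_block_last {d : ℕ} (hd : 0 < d) (i : ℕ) :
    SG d (2 * d * (i + 1)) = SG d (2 * d * i + 2) := by
  rw [show 2 * d * (i + 1) = 2 * d * i + 2 + 2 * (d - 1) by rw [mul_add]; omega]
  exact SG_block_add_two_mul hd (d - 1) (by omega) (by omega) (by omega)

/-- If `SG (2d(i+1)+2)` were `0`, then `SG (i+2) ≠ 0`, and with `SG (2d(i+1)) = SG (2di+2) ≠ 0`
this forces `SG (2d(i+1)+1) = 0`, whence `SG (2d(i+1)+2) = mex2 0 _ ≠ 0`. -/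
lemma SG_block_two_ne_zero {d : ℕ} (hd : 0 < d) (i : ℕ) : SG d (2 * d * i + 2) ≠ 0 := by
  induction i with
  | zero =>
    have h := SG_block hd (i := 0) (p := 1) (by omega) (by omega)
    simp only [mul_zero, zero_add] at h ⊢
    rw [show (2 : ℕ) = 1 + 1 from rfl, h, show SG d 1 = 0 by rw [SG]]
    decide
  | succ i ih =>
    have h₁ := SG_block hd (i := i + 1) (p := 0) (by omega) (by positivity)
    have h₂ := SG_block hd (i := i + 1) (p := 1) (by omega) (by omega)
    rw [add_zero, SG_block_last hd] at h₁
    rw [h₂, h₁]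
    by_cases hv : SG d (i + 1 + 1) = 0
    · rw [hv]; exact mex2_ne_right _ _
    · rw [mex2_eq_zero_iff.mpr ⟨ih, hv⟩, ne_eq, mex2_eq_zero_iff]; tauto

lemma SG_ne_zero_of_even {d : ℕ} (hd : 0 < d) {n : ℕ} (hn : Even n) (h2 : 2 ≤ n) :
    SG d n ≠ 0 := by
  obtain ⟨k, hk⟩ := hn
  have hdiv := Nat.div_add_mod (n - 2) (2 * d)
  have hmod : (n - 2) % (2 * d) < 2 * d := Nat.mod_lt _ (by omega)
  have heven : (n - 2) % (2 * d) % 2 = 0 := by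
    rw [Nat.mod_mul_right_mod]; omega
  rw [show n = 2 * d * ((n - 2) / (2 * d)) + 2 + 2 * ((n - 2) % (2 * d) / 2) by omega,
    SG_block_add_two_mul hd _ (by omega) (by omega) (by omega)]
  exact SG_block_two_ne_zero hd _

lemma SG_block_one_eq_zero_of_odd {d : ℕ} (hd : 0 < d) {j : ℕ} (hj : Odd j) :
    SG d (2 * d * j + 1) = 0 := by
  have hj1 : 1 ≤ j := hj.pos
  have hj2 : 1 * 2 ≤ 2 * d * j := by nlinarith
  rw [← add_zero (2 * d * j), SG_block hd (by omega) (by omega), add_zero, mex2_eq_zero_iff]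
  exact ⟨SG_ne_zero_of_even hd (by simp) (by omega),
    SG_ne_zero_of_even hd hj.add_one (by omega)⟩

lemma SG_two_mul_mul_add_one {d : ℕ} (hd : 0 < d) {K : ℕ} (hK : Even K)
    (hq : Odd (K / (2 * d))) : SG d (2 * d * K + 1) = SG d K := by
  have hdiv := Nat.div_add_mod K (2 * d)
  have hmod : K % (2 * d) < 2 * d := Nat.mod_lt _ (by omega)
  have hmod_even : K % (2 * d) % 2 = 0 := by
    rw [Nat.mod_mul_right_mod]; exact Nat.even_iff.mp hK
  have hq1 : 1 ≤ K / (2 * d) := hq.pos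
  have hq2 : 2 * d ≤ 2 * d * (K / (2 * d)) := by simpa using Nat.mul_le_mul_left (2 * d) hq1
  have hK2 : 2 ≤ K := by omega
  have hv : SG d K ≠ 0 := SG_ne_zero_of_even hd hK hK2
  have hsucc : SG d (K + 1) = 0 := by
    rw [show K + 1 = 2 * d * (K / (2 * d)) + 1 + 2 * (K % (2 * d) / 2) by omega,
      SG_block_add_two_mul hd _ Nat.one_pos (by omega) (by omega)]
    exact SG_block_one_eq_zero_of_odd hd hq
  have hmul : SG d (2 * d * K) = mex2 0 (SG d K) := by
    obtain ⟨j, rfl⟩ : ∃ j, K = j + 1 := ⟨K - 1, by omega⟩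
    have hj : Odd j := by simpa [Nat.even_add_one] using hK
    have hj2 : 1 * 2 ≤ 2 * d * j := by nlinarith [hj.pos]
    rw [SG_block_last hd, SG_block hd (by omega) (by omega), SG_block_one_eq_zero_of_odd hd hj]
  have hlast := SG_block hd (i := K) (p := 0) (by omega) (by positivity)
  rw [add_zero] at hlast
  rw [hlast, hmul, hsucc, mex2_comm 0, mex2_mex2_of_ne (SG_le_two _ _) (by norm_num) hv]

theorem stmt_9_general (d : ℕ) (hd : 1 ≤ d) (c₁ c₂ m : ℕ)
    (h1 : Even c₁) (h2 : Odd c₂) (b1 : c₁ ≤ 2 * d - 1) :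
    SG d (1 + 2 * d * c₁ + (2 * d) ^ 2 * c₂ + (2 * d) ^ 3 * m) =
      SG d (c₁ + 2 * d * c₂ + (2 * d) ^ 2 * m) := by
  have hK : c₁ + 2 * d * c₂ + (2 * d) ^ 2 * m = c₁ + 2 * d * (c₂ + 2 * d * m) := by ring
  have hq : (c₁ + 2 * d * c₂ + (2 * d) ^ 2 * m) / (2 * d) = c₂ + 2 * d * m := by
    rw [hK, Nat.add_mul_div_left _ _ (by omega), Nat.div_eq_of_lt (by omega), zero_add]
  rw [show 1 + 2 * d * c₁ + (2 * d) ^ 2 * c₂ + (2 * d) ^ 3 * m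
      = 2 * d * (c₁ + 2 * d * c₂ + (2 * d) ^ 2 * m) + 1 by ring]
  refine SG_two_mul_mul_add_one hd ?_ ?_
  · rw [hK]; exact h1.add (by simp)
  · rw [hq]; exact h2.add_even (by simp)

theorem stmt_9 (d : ℕ) (hd : 1 ≤ d) (c₁ c₂ m : ℕ) (hm : 1 ≤ m)
    (h1 : Even c₁) (h2 : Odd c₂) (b1 : c₁ ≤ 2 * d - 1) (b2 : c₂ ≤ 2 * d - 1) :
    SG d (1 + 2 * d * c₁ + (2 * d) ^ 2 * c₂ + (2 * d) ^ 3 * m) =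
      SG d (c₁ + 2 * d * c₂ + (2 * d) ^ 2 * m) :=
  stmt_9_general d hd c₁ c₂ m h1 h2 b1
end
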